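/- Let ψ: 𝔻 → ℂ be analytic and not identically zero, φ a nonconstant analytic self-map of 𝔻, n ≥ 1, with D_{ψ,φ,n} bounded and coposinormal on H²(𝔻). Then φ is injective on 𝔻. -/

import Mathlib

/-!
Coposinormality gives `ker D* ⊆ ker D`, and `ker D` lies in the polynomials of degree `< n`:
`ψ ≢ 0` forces `f⁽ⁿ⁾ ∘ φ = 0` on an open set, and `φ` is an open map. If `φ a = φ b` with
`a ≠ b` in `𝔻 \ {0}`, then `conj ψ(b) K_a - conj ψ(a) K_b ∈ ker D*`, and comparing its
coefficients of index `n` and `n + 1` gives `a = b`; here `ψ(b) ≠ 0`, since otherwise already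
`K_b ∈ ker D*`. Finally, an open map injective off one point of an open set is injective on it.
-/

open Complex Metric
open scoped InnerProductSpace

noncomputable section

/-- The Hardy space `H²(𝔻)`, modeled as the Hilbert space of square-summable
Taylor coefficient sequences. -/
abbrev H2 : Type := lp (fun _ : ℕ => ℂ) 2

/-- The analytic function on the unit disk represented by an element of `H²`. -/
noncomputable def H2.toFun (f : H2) (z : ℂ) : ℂ := ∑' k, f k * z ^ k

/-- `T` is posinormal if `T T* = T* P T` for some positive operator `P`. -/
def Posinormal {H : Type*} [NormedAddCommGroup H] [InnerProductSpace ℂ H] [CompleteSpace H]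
    (T : H →L[ℂ] H) : Prop :=
  ∃ P : H →L[ℂ] H, P.IsPositive ∧
    T ∘L ContinuousLinearMap.adjoint T = ContinuousLinearMap.adjoint T ∘L P ∘L T

/-- `T` realizes the weighted composition-differentiation operator `D_{ψ,φ,n}` on `H²`. -/
def IsWCD (ψ φ : ℂ → ℂ) (n : ℕ) (T : H2 →L[ℂ] H2) : Prop :=
  ∀ f : H2, ∀ z ∈ ball (0 : ℂ) 1,
    H2.toFun (T f) z = ψ z * iteratedDeriv n (H2.toFun f) (φ z)

open ComplexConjugate Filter Topology Set FormalMultilinearSeries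

theorem Set.InjOn.of_injOn_diff_singleton {X Y : Type*} [TopologicalSpace X] [T2Space X]
    [TopologicalSpace Y] [T1Space Y] [∀ y : Y, (𝓝[≠] y).NeBot] {f : X → Y} {U : Set X} {p : X}
    (hU : IsOpen U) (hf : ∀ s ⊆ U, IsOpen s → IsOpen (f '' s)) (hinj : InjOn f (U \ {p})) :
    InjOn f U := by
  intro a ha b hb hab
  by_contra hne
  obtain ⟨A, B, hA, hB, haA, hbB, hAB⟩ := t2_separation hne
  have hW : f '' (U ∩ A) ∩ f '' (U ∩ B) ∈ 𝓝 (f a) :=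
    ((hf _ inter_subset_left (hU.inter hA)).inter (hf _ inter_subset_left (hU.inter hB))).mem_nhds
      ⟨⟨a, ⟨ha, haA⟩, rfl⟩, ⟨b, ⟨hb, hbB⟩, hab.symm⟩⟩
  -- the images of disjoint neighbourhoods of `a` and `b` overlap in an open set, which contains
  -- a value other than `f p`
  obtain ⟨c, ⟨⟨a', ⟨ha'U, ha'A⟩, rfl⟩, ⟨b', ⟨hb'U, hb'B⟩, hb'⟩⟩, hcp⟩ :=
    (infinite_of_mem_nhds _ hW).exists_notMem_finset {f p}
  rw [Finset.mem_singleton] at hcp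
  have ha'p : a' ≠ p := by rintro rfl; exact hcp rfl
  have hb'p : b' ≠ p := by rintro rfl; exact hcp hb'.symm
  exact hAB.ne_of_mem ha'A hb'B (hinj ⟨ha'U, ha'p⟩ ⟨hb'U, hb'p⟩ hb'.symm)

theorem eqOn_zero_of_mul_comp_eq_zero {X : Type*} [TopologicalSpace X] {ψ : X → ℂ} {φ : X → ℂ}
    {F : ℂ → ℂ} {U : Set X} {V : Set ℂ} (hU : IsOpen U) (hψ : ContinuousOn ψ U)
    (hψ0 : ∃ z ∈ U, ψ z ≠ 0) (hφ : ∀ s ⊆ U, IsOpen s → IsOpen (φ '' s)) (hφUV : MapsTo φ U V)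
    (hF : AnalyticOnNhd ℂ F V) (hV : IsPreconnected V) (h : ∀ z ∈ U, ψ z * F (φ z) = 0) :
    EqOn F 0 V := by
  obtain ⟨z₀, hz₀, hψz₀⟩ := hψ0
  set W := U ∩ ψ ⁻¹' {0}ᶜ
  have hWopen : IsOpen (φ '' W) :=
    hφ W inter_subset_left (hψ.isOpen_inter_preimage hU isOpen_compl_singleton)
  have hFW : F =ᶠ[𝓝 (φ z₀)] 0 := by
    refine eventually_of_mem (hWopen.mem_nhds ⟨z₀, ⟨hz₀, hψz₀⟩, rfl⟩) ?_
    rintro _ ⟨z, ⟨hzU, hψz⟩, rfl⟩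
    exact (mul_eq_zero.mp (h z hzU)).resolve_left hψz
  exact hF.eqOn_zero_of_preconnected_of_eventuallyEq_zero hV (hφUV hz₀) hFW

theorem Posinormal.adjoint_apply_eq_zero {H : Type*} [NormedAddCommGroup H]
    [InnerProductSpace ℂ H] [CompleteSpace H] {S : H →L[ℂ] H} (hS : Posinormal S) {x : H}
    (hx : S x = 0) : ContinuousLinearMap.adjoint S x = 0 := by
  obtain ⟨P, -, hP⟩ := hS
  have h : S (ContinuousLinearMap.adjoint S x) = 0 := by
    simpa [hx] using congr($hP x)
  rw [← inner_self_eq_zero (𝕜 := ℂ), ContinuousLinearMap.adjoint_inner_left, h, inner_zero_right]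

namespace H2

theorem one_le_radius_ofScalars (f : H2) : 1 ≤ (ofScalars ℂ ⇑f).radius := by
  refine ENNReal.le_of_forall_nnreal_lt fun r hr => le_radius_of_bound _ ‖f‖ fun k => ?_
  have hr1 : (r : ℝ) ≤ 1 := by exact_mod_cast hr.le
  rw [ofScalars_norm]
  calc ‖f k‖ * (r : ℝ) ^ k ≤ ‖f‖ * 1 := by
        gcongr
        · exact lp.norm_apply_le_norm two_ne_zero f k
        · exact pow_le_one₀ r.2 hr1
    _ = ‖f‖ := mul_one _

theorem hasFPowerSeriesOnBall_toFun (f : H2) :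
    HasFPowerSeriesOnBall (toFun f) (ofScalars ℂ ⇑f) 0 1 := by
  have h := ((ofScalars ℂ ⇑f).hasFPowerSeriesOnBall
    (zero_lt_one.trans_le f.one_le_radius_ofScalars)).mono one_pos f.one_le_radius_ofScalars
  convert h using 1
  ext z
  simp [toFun, FormalMultilinearSeries.sum, mul_comm]

theorem analyticOnNhd_toFun (f : H2) : AnalyticOnNhd ℂ (toFun f) (ball 0 1) := by
  have h := f.hasFPowerSeriesOnBall_toFun.analyticOnNhd
  rwa [← ENNReal.coe_one, Metric.eball_coe, NNReal.coe_one] at h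

theorem iteratedDeriv_toFun_zero (f : H2) (k : ℕ) :
    iteratedDeriv k (toFun f) 0 = k.factorial * f k := by
  have := f.hasFPowerSeriesOnBall_toFun.factorial_smul 1 k
  rw [ofScalars_apply_eq, ← iteratedDeriv_eq_iteratedFDeriv] at this
  simpa using this.symm

theorem apply_eq_zero_of_eqOn_iteratedDeriv_zero {f : H2} {n k : ℕ}
    (h : EqOn (iteratedDeriv n (toFun f)) 0 (ball 0 1)) (hk : n ≤ k) : f k = 0 := by
  have hloc : iteratedDeriv n (toFun f) =ᶠ[𝓝 0] 0 :=
    eventually_of_mem (isOpen_ball.mem_nhds (mem_ball_self one_pos)) h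
  have hk0 : iteratedDeriv k (toFun f) 0 = 0 := by
    rw [← Nat.sub_add_cancel hk, iteratedDeriv_eq_iterate, Function.iterate_add_apply,
      ← iteratedDeriv_eq_iterate, ← iteratedDeriv_eq_iterate, hloc.iteratedDeriv_eq]
    exact iteratedDeriv_fun_const_zero
  rw [iteratedDeriv_toFun_zero] at hk0
  exact (mul_eq_zero.mp hk0).resolve_left (Nat.cast_ne_zero.mpr k.factorial_ne_zero)

@[simp]
theorem toFun_zero : toFun 0 = 0 := by
  ext z
  simp [toFun]

def kernel (w : ℂ) (hw : ‖w‖ < 1) : H2 :=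
  ⟨fun k => conj w ^ k, by
    refine memℓp_gen ?_
    have h := summable_geometric_of_lt_one (by positivity)
      (pow_lt_one₀ (norm_nonneg w) hw two_ne_zero)
    refine h.congr fun k => ?_
    rw [ENNReal.toReal_ofNat, Real.rpow_two, norm_pow, Complex.norm_conj, ← pow_mul, ← pow_mul,
      mul_comm]⟩

@[simp]
theorem kernel_apply (w : ℂ) (hw : ‖w‖ < 1) (k : ℕ) : kernel w hw k = conj w ^ k := rfl

theorem inner_kernel (w : ℂ) (hw : ‖w‖ < 1) (f : H2) : ⟪kernel w hw, f⟫_ℂ = toFun f w := by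
  simp [lp.inner_eq_tsum, toFun, mul_comm]

end H2

namespace IsWCD

variable {ψ φ : ℂ → ℂ} {n : ℕ} {T : H2 →L[ℂ] H2}

theorem inner_adjoint_kernel (hT : IsWCD ψ φ n T) {w : ℂ} (hw : w ∈ ball (0 : ℂ) 1) (f : H2) :
    ⟪ContinuousLinearMap.adjoint T (H2.kernel w (mem_ball_zero_iff.mp hw)), f⟫_ℂ =
      ψ w * iteratedDeriv n (H2.toFun f) (φ w) := by
  rw [ContinuousLinearMap.adjoint_inner_left, H2.inner_kernel, hT f w hw]

theorem adjoint_kernel_eq_zero (hT : IsWCD ψ φ n T) {w : ℂ} (hw : w ∈ ball (0 : ℂ) 1)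
    (hψw : ψ w = 0) : ContinuousLinearMap.adjoint T (H2.kernel w (mem_ball_zero_iff.mp hw)) = 0 :=
  ext_inner_right ℂ fun f => by rw [hT.inner_adjoint_kernel hw, hψw, zero_mul, inner_zero_left]

theorem adjoint_sub_kernel_eq_zero (hT : IsWCD ψ φ n T) {a b : ℂ} (ha : a ∈ ball (0 : ℂ) 1)
    (hb : b ∈ ball (0 : ℂ) 1) (hab : φ a = φ b) :
    ContinuousLinearMap.adjoint T (conj (ψ b) • H2.kernel a (mem_ball_zero_iff.mp ha) -
      conj (ψ a) • H2.kernel b (mem_ball_zero_iff.mp hb)) = 0 :=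
  ext_inner_right ℂ fun f => by
    rw [map_sub, map_smul, map_smul, inner_sub_left, inner_smul_left, inner_smul_left,
      hT.inner_adjoint_kernel ha, hT.inner_adjoint_kernel hb, hab, conj_conj, conj_conj,
      inner_zero_left]
    ring

theorem apply_eq_zero_of_map_eq_zero (hT : IsWCD ψ φ n T) (hψ : ContinuousOn ψ (ball 0 1))
    (hψ0 : ∃ z ∈ ball (0 : ℂ) 1, ψ z ≠ 0)
    (hφ : ∀ s ⊆ ball (0 : ℂ) 1, IsOpen s → IsOpen (φ '' s)) (hφm : MapsTo φ (ball 0 1) (ball 0 1))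
    {g : H2} (hg : T g = 0) {k : ℕ} (hk : n ≤ k) : g k = 0 := by
  refine H2.apply_eq_zero_of_eqOn_iteratedDeriv_zero ?_ hk
  refine eqOn_zero_of_mul_comp_eq_zero isOpen_ball hψ hψ0 hφ hφm
    (by simpa only [iteratedDeriv_eq_iterate] using (H2.analyticOnNhd_toFun g).iterated_deriv n)
    (convex_ball 0 1).isPreconnected fun z hz => ?_
  rw [← hT g z hz, hg, H2.toFun_zero, Pi.zero_apply]

theorem weight_ne_zero (hT : IsWCD ψ φ n T) (hn : 1 ≤ n)
    (hker : ∀ g : H2, ContinuousLinearMap.adjoint T g = 0 → ∀ k, n ≤ k → g k = 0)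
    {w : ℂ} (hw : w ∈ ball (0 : ℂ) 1) (hw0 : w ≠ 0) : ψ w ≠ 0 := fun hψw => by
  have h := hker _ (hT.adjoint_kernel_eq_zero hw hψw) n le_rfl
  rw [H2.kernel_apply, pow_eq_zero_iff (by omega), map_eq_zero] at h
  exact hw0 h

theorem injOn_ball_diff_zero (hT : IsWCD ψ φ n T) (hn : 1 ≤ n)
    (hker : ∀ g : H2, ContinuousLinearMap.adjoint T g = 0 → ∀ k, n ≤ k → g k = 0) :
    InjOn φ (ball 0 1 \ {0}) := by
  rintro a ⟨ha, ha0⟩ b ⟨hb, hb0⟩ hab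
  have hcoeff (k : ℕ) (hk : n ≤ k) : conj (ψ b) * conj a ^ k = conj (ψ a) * conj b ^ k := by
    have h := hker _ (hT.adjoint_sub_kernel_eq_zero ha hb hab) k hk
    rwa [lp.coeFn_sub, lp.coeFn_smul, lp.coeFn_smul, Pi.sub_apply, Pi.smul_apply, Pi.smul_apply,
      H2.kernel_apply, H2.kernel_apply, smul_eq_mul, smul_eq_mul, sub_eq_zero] at h
  have hψb : conj (ψ b) ≠ 0 := by simpa using hT.weight_ne_zero hn hker hb hb0
  have hfactor : conj (ψ b) * conj a ^ n * (conj a - conj b) = 0 := by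
    linear_combination hcoeff (n + 1) (by omega) - conj b * hcoeff n le_rfl
  have hapow : conj a ^ n ≠ 0 := pow_ne_zero _ (by simpa using ha0)
  have h : conj a = conj b :=
    sub_eq_zero.mp ((mul_eq_zero.mp hfactor).resolve_left (mul_ne_zero hψb hapow))
  exact RingHom.injective _ h

end IsWCD

/-- If `D_{ψ,φ,n}` is bounded and coposinormal, then `φ` is injective on `𝔻`. -/
theorem stmt13 (ψ φ : ℂ → ℂ)
    (hψ : DifferentiableOn ℂ ψ (ball (0 : ℂ) 1))
    (hψ0 : ∃ z ∈ ball (0 : ℂ) 1, ψ z ≠ 0)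
    (hφ : DifferentiableOn ℂ φ (ball (0 : ℂ) 1))
    (hφm : ∀ z ∈ ball (0 : ℂ) 1, φ z ∈ ball (0 : ℂ) 1)
    (hφnc : ¬ ∃ c : ℂ, ∀ z ∈ ball (0 : ℂ) 1, φ z = c)
    (n : ℕ) (hn : 1 ≤ n)
    (T : H2 →L[ℂ] H2) (hT : IsWCD ψ φ n T)
    (hcopos : Posinormal (ContinuousLinearMap.adjoint T)) :
    Set.InjOn φ (ball (0 : ℂ) 1) := by
  have hφopen : ∀ s ⊆ ball (0 : ℂ) 1, IsOpen s → IsOpen (φ '' s) :=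
    ((hφ.analyticOnNhd isOpen_ball).is_constant_or_isOpen
      (convex_ball 0 1).isPreconnected).resolve_left hφnc
  have hker (g : H2) (hg : ContinuousLinearMap.adjoint T g = 0) (k : ℕ) (hk : n ≤ k) : g k = 0 :=
    hT.apply_eq_zero_of_map_eq_zero hψ.continuousOn hψ0 hφopen hφm
      (by simpa using hcopos.adjoint_apply_eq_zero hg) hk
  exact .of_injOn_diff_singleton isOpen_ball hφopen (hT.injOn_ball_diff_zero hn hker)
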